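/- In the quantum superalgebra osp_q(1|2), the element Γ^q = (−A₊A₋ + (q^{−1/2}K² − q^{1/2}K^{−2})/(q−q⁻¹))·P commutes with the generators A₊, A₋, K, K⁻¹ and P. -/
import Mathlib

variable {𝕜 A : Type*} [Field 𝕜] [Ring A] [Algebra 𝕜 A]

/-- The Casimir element `Γ^q = (−A₊A₋ + (q^{−1/2}K² − q^{1/2}K⁻²)/(q−q⁻¹))·P` of
`osp_q(1|2)`, where `s = q^{1/2}`. -/
def ospCasimir (s : 𝕜) (Ap Am K K' P : A) : A :=
  (-(Ap * Am) + (s ^ 2 - (s ^ 2)⁻¹)⁻¹ • (s⁻¹ • (K * K) - s • (K' * K'))) * P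

/-- In the quantum superalgebra `osp_q(1|2)` (with `s = q^{1/2}` invertible and
`q = s²` not a root of unity), the element `Γ^q` commutes with the generators
`A₊, A₋, K, K⁻¹, P`. -/
theorem ospCasimir_central (s : 𝕜) (hs : s ≠ 0)
    (hroot : ∀ n : ℕ, 0 < n → (s ^ 2) ^ n ≠ 1)
    (Ap Am K K' P : A)
    (hKAp : K * Ap * K' = s • Ap)
    (hKAm : K * Am * K' = s⁻¹ • Am)
    (hAA : Ap * Am + Am * Ap = (s - s⁻¹)⁻¹ • (K * K - K' * K'))
    (hPAp : P * Ap + Ap * P = 0)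
    (hPAm : P * Am + Am * P = 0)
    (hPK : P * K = K * P)
    (hPK' : P * K' = K' * P)
    (hKK' : K * K' = 1) (hK'K : K' * K = 1)
    (hP2 : P * P = 1) :
    ospCasimir s Ap Am K K' P * Ap = Ap * ospCasimir s Ap Am K K' P ∧
    ospCasimir s Ap Am K K' P * Am = Am * ospCasimir s Ap Am K K' P ∧
    ospCasimir s Ap Am K K' P * K = K * ospCasimir s Ap Am K K' P ∧
    ospCasimir s Ap Am K K' P * K' = K' * ospCasimir s Ap Am K K' P ∧
    ospCasimir s Ap Am K K' P * P = P * ospCasimir s Ap Am K K' P := by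
  -- scalar facts
  have hs2 : s ^ 2 ≠ 1 := by simpa using hroot 1 one_pos
  have hs4 : s ^ 2 ≠ -1 := by
    intro h
    have := hroot 2 two_pos
    rw [h] at this
    exact this (by ring)
  have hsub : s - s⁻¹ ≠ 0 := by
    intro h
    apply hs2
    have h' := sub_eq_zero.mp h
    rw [sq]
    nth_rewrite 2 [h']
    exact mul_inv_cancel₀ hs
  have hadd : s + s⁻¹ ≠ 0 := by
    intro h
    apply hs4
    have h' : s = -s⁻¹ := eq_neg_of_add_eq_zero_left h
    rw [sq]
    nth_rewrite 2 [h']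
    rw [mul_neg, mul_inv_cancel₀ hs]
  have hq : s ^ 2 - (s ^ 2)⁻¹ ≠ 0 := by
    have hfac : s ^ 2 - (s ^ 2)⁻¹ = (s - s⁻¹) * (s + s⁻¹) := by field_simp; ring
    rw [hfac]
    exact mul_ne_zero hsub hadd
  set c : 𝕜 := (s ^ 2 - (s ^ 2)⁻¹)⁻¹ with hc
  set d : 𝕜 := (s - s⁻¹)⁻¹ with hd
  have hinv : s * s⁻¹ = 1 := mul_inv_cancel₀ hs
  have hfac : s ^ 2 - (s ^ 2)⁻¹ = (s - s⁻¹) * (s + s⁻¹) := by field_simp; ring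
  have hcd : c * (s + s⁻¹) = d := by
    rw [hc, hd, hfac, mul_inv, mul_assoc, inv_mul_cancel₀ hadd, mul_one]
  -- basic commutation rules
  have h1 : K * Ap = s • (Ap * K) := by
    have := congrArg (· * K) hKAp
    simpa [mul_assoc, hK'K, smul_mul_assoc] using this
  have h2 : Ap * K' = s • (K' * Ap) := by
    have := congrArg (K' * ·) hKAp
    simpa [← mul_assoc, hK'K, mul_smul_comm] using this
  have h3 : K * Am = s⁻¹ • (Am * K) := by
    have := congrArg (· * K) hKAm
    simpa [mul_assoc, hK'K, smul_mul_assoc] using this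
  have h4 : Am * K' = s⁻¹ • (K' * Am) := by
    have := congrArg (K' * ·) hKAm
    simpa [← mul_assoc, hK'K, mul_smul_comm] using this
  have h1' : K' * Ap = s⁻¹ • (Ap * K') := by
    rw [h2, smul_smul, inv_mul_cancel₀ hs, one_smul]
  have h3' : K' * Am = s • (Am * K') := by
    rw [h4, smul_smul, mul_inv_cancel₀ hs, one_smul]
  have h1r : Ap * K = s⁻¹ • (K * Ap) := by
    rw [h1, smul_smul, inv_mul_cancel₀ hs, one_smul]
  have h3r : Am * K = s • (K * Am) := by
    rw [h3, smul_smul, mul_inv_cancel₀ hs, one_smul]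
  -- squared commutation, left-associated
  have hKKAp : K * K * Ap = (s * s) • (Ap * K * K) := by
    rw [mul_assoc, h1, mul_smul_comm, ← mul_assoc, h1, smul_mul_assoc, smul_smul]
  have hK'K'Ap : K' * K' * Ap = (s⁻¹ * s⁻¹) • (Ap * K' * K') := by
    rw [mul_assoc, h1', mul_smul_comm, ← mul_assoc, h1', smul_mul_assoc, smul_smul]
  have hKKAm : K * K * Am = (s⁻¹ * s⁻¹) • (Am * K * K) := by
    rw [mul_assoc, h3, mul_smul_comm, ← mul_assoc, h3, smul_mul_assoc, smul_smul]
  have hK'K'Am : K' * K' * Am = (s * s) • (Am * K' * K') := by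
    rw [mul_assoc, h3', mul_smul_comm, ← mul_assoc, h3', smul_mul_assoc, smul_smul]
  -- P (anti)commutation
  have hPAp' : Ap * P = -(P * Ap) := eq_neg_of_add_eq_zero_right hPAp
  have hPAm' : Am * P = -(P * Am) := eq_neg_of_add_eq_zero_right hPAm
  have hPAp'' : P * Ap = -(Ap * P) := eq_neg_of_add_eq_zero_left hPAp
  have hPAm'' : P * Am = -(Am * P) := eq_neg_of_add_eq_zero_left hPAm
  set X : A := -(Ap * Am) + c • (s⁻¹ • (K * K) - s • (K' * K')) with hX
  have hCas : ospCasimir s Ap Am K K' P = X * P := rfl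
  -- key rewriting lemmas from hAA
  have keyAp : Ap * Am * Ap =
      d • (Ap * K * K) - d • (Ap * K' * K') - Ap * Ap * Am := by
    have t := congrArg (Ap * ·) hAA
    simp only [mul_add, mul_sub, mul_smul_comm, smul_sub, ← mul_assoc] at t
    exact eq_sub_of_add_eq' t
  have keyAm : Ap * Am * Am =
      (d * (s⁻¹ * s⁻¹)) • (Am * K * K) - (d * (s * s)) • (Am * K' * K')
        - Am * Ap * Am := by
    have t := congrArg (· * Am) hAA
    simp only [add_mul, sub_mul, smul_mul_assoc, smul_sub, ← mul_assoc] at t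
    rw [hKKAm, hK'K'Am, smul_smul, smul_smul] at t
    exact eq_sub_of_add_eq t
  -- X anticommutes with Ap and Am
  have hXAp : X * Ap = -(Ap * X) := by
    rw [eq_neg_iff_add_eq_zero, hX]
    simp only [add_mul, mul_add, neg_mul, mul_neg, sub_mul, mul_sub, smul_mul_assoc,
      mul_smul_comm, smul_sub, smul_smul, ← mul_assoc]
    rw [keyAp, hKKAp, hK'K'Ap]
    match_scalars
    · linear_combination hcd + c * s * hinv
    · linear_combination -hcd - c * s⁻¹ * hinv
    · ring
  have hXAm : X * Am = -(Am * X) := by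
    rw [eq_neg_iff_add_eq_zero, hX]
    simp only [add_mul, mul_add, neg_mul, mul_neg, sub_mul, mul_sub, smul_mul_assoc,
      mul_smul_comm, smul_sub, smul_smul, ← mul_assoc]
    rw [keyAm, hKKAm, hK'K'Am]
    match_scalars
    · linear_combination (s⁻¹ * s⁻¹) * hcd - c * s⁻¹ * hinv
    · linear_combination -(s * s) * hcd + c * s * hinv
    · ring
  -- X commutes with K, K', P
  have pK : Ap * Am * K = K * Ap * Am := by
    rw [mul_assoc, h3r, mul_smul_comm, ← mul_assoc, h1r, smul_mul_assoc, smul_smul,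
      mul_inv_cancel₀ hs, one_smul]
  have pK' : Ap * Am * K' = K' * Ap * Am := by
    rw [mul_assoc, h4, mul_smul_comm, ← mul_assoc, h2, smul_mul_assoc, smul_smul,
      inv_mul_cancel₀ hs, one_smul]
  have pP : Ap * Am * P = P * Ap * Am := by
    rw [mul_assoc, hPAm', mul_neg, ← mul_assoc, hPAp', neg_mul, neg_neg]
  have eK1 : K' * K' * K = K' := by rw [mul_assoc, hK'K, mul_one]
  have eK2 : K * K' * K' = K' := by rw [hKK', one_mul]
  have eK3 : K * K * K' = K := by rw [mul_assoc, hKK', mul_one]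
  have eK4 : K' * K * K = K := by rw [hK'K, one_mul]
  have eKP : K * K * P = P * K * K := by
    rw [mul_assoc, ← hPK, ← mul_assoc, ← hPK]
  have eK'P : K' * K' * P = P * K' * K' := by
    rw [mul_assoc, ← hPK', ← mul_assoc, ← hPK']
  have hXK : X * K = K * X := by
    rw [hX]
    simp only [add_mul, mul_add, neg_mul, mul_neg, sub_mul, mul_sub, smul_mul_assoc,
      mul_smul_comm, smul_sub, smul_smul, ← mul_assoc]
    rw [pK, eK1, eK2]
  have hXK' : X * K' = K' * X := by
    rw [hX]
    simp only [add_mul, mul_add, neg_mul, mul_neg, sub_mul, mul_sub, smul_mul_assoc,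
      mul_smul_comm, smul_sub, smul_smul, ← mul_assoc]
    rw [pK', eK3, eK4]
  have hXP : X * P = P * X := by
    rw [hX]
    simp only [add_mul, mul_add, neg_mul, mul_neg, sub_mul, mul_sub, smul_mul_assoc,
      mul_smul_comm, smul_sub, smul_smul, ← mul_assoc]
    rw [pP, eKP, eK'P]
  refine ⟨?_, ?_, ?_, ?_, ?_⟩
  · rw [hCas, mul_assoc, hPAp'', mul_neg, ← mul_assoc, hXAp, neg_mul, neg_neg, mul_assoc]
  · rw [hCas, mul_assoc, hPAm'', mul_neg, ← mul_assoc, hXAm, neg_mul, neg_neg, mul_assoc]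
  · rw [hCas, mul_assoc, hPK, ← mul_assoc, hXK, mul_assoc]
  · rw [hCas, mul_assoc, hPK', ← mul_assoc, hXK', mul_assoc]
  · rw [hCas, mul_assoc, hP2, mul_one, ← mul_assoc, ← hXP, mul_assoc, hP2, mul_one]
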